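/- In the setting above, ∂²_{mm}(m H(p,m)) equals the Schur complement of the block m D²_{vv}f(v*,m) in the matrix Θ(v*, m) = [[∂²_{mm}(m f(v*,m)), m ∂_m∇_v f(v*,m)ᵀ],[m ∂_m∇_v f(v*,m), m D²_{vv}f(v*,m)]]; that is, ∂²_{mm}(m H(p,m)) = ∂²_{mm}(m f(·,m))(v*) − m ∂_m∇_v f(v*,m) · (m D²_{vv}f(v*,m))⁻¹ (m ∂_m∇_v f(v*,m)). Consequently, if Θ(v,m) is positive definite for all (v,m) with m > 0, then m ↦ m H(p,m) is strictly convex on (0,∞) for every p. -/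

import Mathlib

/-!
Along the minimiser curve `c(s) = v*(p, s)` the first-order condition `∇ᵥf(c s, s) = -p` holds,
so by the envelope theorem `∂ₘH(p, s) = ∂ₘf(c s, s)`, and differentiating once more
`∂²ₘₘ(mH) = ∂²ₘₘ(m f(c m, ·)) + m D²f((c', 0), (0, 1))`. Differentiating the first-order
condition gives `D²f((c', 1), (y, 0)) = 0` for all `y`; together with the symmetry of `D²f`
and `D²ᵥᵥf u = ∂ₘ∇ᵥf` this turns the last term into `-m ⟪∂ₘ∇ᵥf, u⟫`, the Schur complement.
Strict convexity follows because positive definiteness of `Θ` at the vector `(1, -u)` is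
exactly positivity of that Schur complement.
-/

open InnerProductSpace Filter Topology ContinuousLinearMap

section Calculus

variable {E : Type*} [NormedAddCommGroup E] [NormedSpace ℝ E]

theorem deriv_deriv_id_mul {φ φ' : ℝ → ℝ} {φ'' m : ℝ}
    (hφ : ∀ᶠ s in 𝓝 m, HasDerivAt φ (φ' s) s) (hφ' : HasDerivAt φ' φ'' m) :
    deriv (fun t => deriv (fun s => s * φ s) t) m = 2 * φ' m + m * φ'' := by
  have hderiv : deriv (fun s => s * φ s) =ᶠ[𝓝 m] fun s => φ s + s * φ' s := by
    filter_upwards [hφ] with s hs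
    simpa using ((hasDerivAt_id' s).fun_mul hs).deriv
  have h2 := hφ.self_of_nhds.fun_add ((hasDerivAt_id' m).fun_mul hφ')
  rw [hderiv.deriv_eq, h2.deriv, one_mul]
  ring

theorem DifferentiableAt.hasDerivAt_comp_graph {X : Type*}
    [NormedAddCommGroup X] [NormedSpace ℝ X] {g : E × ℝ → X} {c : ℝ → E} {c' : E} {s : ℝ}
    (hg : DifferentiableAt ℝ g (c s, s)) (hc : HasDerivAt c c' s) :
    HasDerivAt (fun t => g (c t, t)) (fderiv ℝ g (c s, s) (c', 1)) s :=
  hg.hasFDerivAt.comp_hasDerivAt (f := fun t => (c t, t)) s (hc.prodMk (hasDerivAt_id s))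

theorem hasDerivAt_fderiv_apply_comp_graph {F : E × ℝ → ℝ} (hF : ContDiff ℝ 2 F) {c : ℝ → E}
    {c' : E} {s : ℝ} (hc : HasDerivAt c c' s) (η : E × ℝ) :
    HasDerivAt (fun t => fderiv ℝ F (c t, t) η) (fderiv ℝ (fderiv ℝ F) (c s, s) (c', 1) η) s :=
  (apply ℝ ℝ η).hasFDerivAt.comp_hasDerivAt (l := apply ℝ ℝ η) s
    (((hF.fderiv_right le_rfl).differentiable one_ne_zero _).hasDerivAt_comp_graph hc)

theorem ContinuousLinearMap.apply_eq_schur_complement (B : E × ℝ →L[ℝ] E × ℝ →L[ℝ] ℝ)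
    (hB : ∀ ξ η, B ξ η = B η ξ) {w u : E}
    (hw : ∀ y, B (w, 1) (y, 0) = 0) (hu : ∀ y, B (u, 0) (y, 0) = B (0, 1) (y, 0)) :
    B (w, 1) (0, 1) = B (0, 1) (0, 1) - B (0, 1) (u, 0) := by
  have split : ∀ η, B (w, 1) η = B (w, 0) η + B (0, 1) η := fun η => by
    rw [← add_apply, ← map_add, Prod.mk_add_mk, add_zero, zero_add]
  have hwu : B (w, 0) (0, 1) = - B (0, 1) (u, 0) :=
    calc B (w, 0) (0, 1) = B (u, 0) (w, 0) := by rw [hB, hu]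
      _ = B (w, 0) (u, 0) := hB _ _
      _ = - B (0, 1) (u, 0) := by linarith [split (u, 0), hw u]
  rw [split, hwu]
  ring

end Calculus

section Gradient

variable {E : Type*} [NormedAddCommGroup E] [InnerProductSpace ℝ E]

theorem ContinuousLinearMap.surjective_of_inner_apply_pos [FiniteDimensional ℝ E] (A : E →L[ℝ] E)
    (hA : ∀ w, w ≠ 0 → 0 < ⟪w, A w⟫_ℝ) : Function.Surjective A := by
  refine LinearMap.injective_iff_surjective (f := (A : E →ₗ[ℝ] E)).mp
    ((injective_iff_map_eq_zero A).mpr fun w hw => ?_)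
  by_contra hne
  simpa [hw] using hA w hne

theorem ContinuousLinearMap.schur_complement_pos {a : ℝ} {b u : E} (A : E →L[ℝ] E)
    (hΘ : ∀ (μ : ℝ) (w : E), (μ, w) ≠ 0 → 0 < μ ^ 2 * a + 2 * μ * ⟪b, w⟫_ℝ + ⟪w, A w⟫_ℝ)
    (hu : A u = b) : 0 < a - ⟪b, u⟫_ℝ := by
  have h := hΘ 1 (-u) (by simp)
  simp only [map_neg, hu, inner_neg_left, inner_neg_right, neg_neg, one_pow, one_mul,
    mul_one] at h
  linarith [real_inner_comm b u]

variable [CompleteSpace E]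

theorem gradient_eq_neg_of_isLocalMin_inner_add {g : E → ℝ} {p v : E}
    (hg : DifferentiableAt ℝ g v) (hmin : IsLocalMin (fun x => ⟪p, x⟫_ℝ + g x) v) :
    gradient g v = -p := by
  have hzero := ((innerSL ℝ p).hasFDerivAt.add hg.hasFDerivAt).fderiv ▸ hmin.fderiv_eq_zero
  refine ext_inner_right ℝ fun y => ?_
  have hy := congr($hzero y)
  simp only [add_apply, innerSL_apply_apply, zero_apply] at hy
  rw [gradient, toDual_symm_apply, inner_neg_left]
  linarith

noncomputable def partialGradient (f : E → ℝ → ℝ) (q : E × ℝ) : E :=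
  gradient (fun u => f u q.2) q.1

variable {f : E → ℝ → ℝ}

theorem partialGradient_eq_toDual_symm {q : E × ℝ}
    (hf : DifferentiableAt ℝ (Function.uncurry f) q) :
    partialGradient f q
      = (toDual ℝ E).symm ((fderiv ℝ (Function.uncurry f) q).comp (inl ℝ E ℝ)) := by
  obtain ⟨v, t⟩ := q
  have h : HasFDerivAt (fun u => f u t)
      ((fderiv ℝ (Function.uncurry f) (v, t)).comp (inl ℝ E ℝ)) v :=
    hf.hasFDerivAt.comp (g := Function.uncurry f) v (hasFDerivAt_prodMk_left (𝕜 := ℝ) v t)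
  rw [partialGradient, gradient, h.fderiv]

theorem inner_partialGradient {q : E × ℝ} (hf : DifferentiableAt ℝ (Function.uncurry f) q)
    (w : E) : ⟪partialGradient f q, w⟫_ℝ = fderiv ℝ (Function.uncurry f) q (w, 0) := by
  rw [partialGradient_eq_toDual_symm hf, toDual_symm_apply]
  rfl

theorem contDiff_partialGradient (hf : ContDiff ℝ 2 (Function.uncurry f)) :
    ContDiff ℝ 1 (partialGradient f) := by
  rw [show partialGradient f = fun q => (toDual ℝ E).symm
      ((compL ℝ E (E × ℝ) ℝ).flip (inl ℝ E ℝ) (fderiv ℝ (Function.uncurry f) q)) from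
    funext fun q => partialGradient_eq_toDual_symm (hf.differentiable (by norm_num) q)]
  exact (toDual ℝ E).symm.contDiff.comp
    (((compL ℝ E (E × ℝ) ℝ).flip (inl ℝ E ℝ)).contDiff.comp (hf.fderiv_right le_rfl))

theorem inner_fderiv_partialGradient (hf : ContDiff ℝ 2 (Function.uncurry f)) (q ξ : E × ℝ)
    (y : E) :
    ⟪fderiv ℝ (partialGradient f) q ξ, y⟫_ℝ
      = fderiv ℝ (fderiv ℝ (Function.uncurry f)) q ξ (y, 0) := by
  have hG : HasFDerivAt (fun q => ⟪y, partialGradient f q⟫_ℝ)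
      ((innerSL ℝ y).comp (fderiv ℝ (partialGradient f) q)) q :=
    (innerSL ℝ y).hasFDerivAt.comp q
      ((contDiff_partialGradient hf).differentiable one_ne_zero q).hasFDerivAt
  have hF : HasFDerivAt (fun q => fderiv ℝ (Function.uncurry f) q (y, 0))
      ((apply ℝ ℝ (y, 0)).comp (fderiv ℝ (fderiv ℝ (Function.uncurry f)) q)) q :=
    (apply ℝ ℝ (y, 0)).hasFDerivAt.comp (g := apply ℝ ℝ (y, 0)) q
      ((hf.fderiv_right le_rfl).differentiable one_ne_zero q).hasFDerivAt
  have hfun : (fun q => ⟪y, partialGradient f q⟫_ℝ)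
      = fun q => fderiv ℝ (Function.uncurry f) q (y, 0) :=
    funext fun q => (real_inner_comm _ _).trans
      (inner_partialGradient (hf.differentiable (by norm_num) q) y)
  rw [hfun] at hG
  simpa [real_inner_comm] using congr($(hG.unique hF) ξ)

theorem inner_deriv_gradient_snd (hf : ContDiff ℝ 2 (Function.uncurry f)) (v : E) (m : ℝ)
    (y : E) :
    ⟪deriv (fun t => gradient (fun u => f u t) v) m, y⟫_ℝ
      = fderiv ℝ (fderiv ℝ (Function.uncurry f)) (v, m) (0, 1) (y, 0) := by
  have h := ((contDiff_partialGradient hf).differentiable one_ne_zero (v, m)).hasDerivAt_comp_graph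
    (hasDerivAt_const m v)
  rw [← inner_fderiv_partialGradient hf]
  exact congrArg (⟪·, y⟫_ℝ) h.deriv

theorem inner_fderiv_gradient_fst (hf : ContDiff ℝ 2 (Function.uncurry f)) (v : E) (m : ℝ)
    (w y : E) :
    ⟪fderiv ℝ (fun x => gradient (fun u => f u m) x) v w, y⟫_ℝ
      = fderiv ℝ (fderiv ℝ (Function.uncurry f)) (v, m) (w, 0) (y, 0) := by
  have h : HasFDerivAt (fun x => gradient (fun u => f u m) x)
      ((fderiv ℝ (partialGradient f) (v, m)).comp (inl ℝ E ℝ)) v :=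
    ((contDiff_partialGradient hf).differentiable one_ne_zero (v, m)).hasFDerivAt.comp
      (g := partialGradient f) v (hasFDerivAt_prodMk_left (𝕜 := ℝ) v m)
  rw [h.fderiv, ← inner_fderiv_partialGradient hf]
  rfl

theorem hasDerivAt_envelope {c : ℝ → E} {c' p : E} {h : ℝ → ℝ} {s : ℝ}
    (hf : DifferentiableAt ℝ (Function.uncurry f) (c s, s)) (hc : HasDerivAt c c' s)
    (hfoc : partialGradient f (c s, s) = -p)
    (hh : h =ᶠ[𝓝 s] fun t => ⟪p, c t⟫_ℝ + f (c t) t) :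
    HasDerivAt h (fderiv ℝ (Function.uncurry f) (c s, s) (0, 1)) s := by
  have hsum := ((innerSL ℝ p).hasFDerivAt.comp_hasDerivAt s hc).fun_add
    (hf.hasDerivAt_comp_graph hc)
  have hval : innerSL ℝ p c' + fderiv ℝ (Function.uncurry f) (c s, s) (c', 1)
      = fderiv ℝ (Function.uncurry f) (c s, s) (0, 1) := by
    have hsplit : ((c', 1) : E × ℝ) = (c', 0) + (0, 1) := by simp
    rw [hsplit, map_add, ← inner_partialGradient hf, hfoc, inner_neg_left, innerSL_apply_apply]
    ring
  exact hval ▸ hsum.congr_of_eventuallyEq hh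

theorem deriv_deriv_mul_envelope_eq_schur (hf : ContDiff ℝ 2 (Function.uncurry f)) {c : ℝ → E}
    (hc : Differentiable ℝ c) {p : E} {h : ℝ → ℝ} {m : ℝ}
    (hfoc : ∀ᶠ s in 𝓝 m, partialGradient f (c s, s) = -p)
    (hh : ∀ᶠ s in 𝓝 m, h s = ⟪p, c s⟫_ℝ + f (c s) s) {u : E}
    (hu : fderiv ℝ (fun x => gradient (fun u' => f u' m) x) (c m) u
      = deriv (fun t => gradient (fun u' => f u' t) (c m)) m) :
    deriv (fun t => deriv (fun s => s * h s) t) m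
      = deriv (fun t => deriv (fun s => s * f (c m) s) t) m
        - m * ⟪deriv (fun t => gradient (fun u' => f u' t) (c m)) m, u⟫_ℝ := by
  set B := fderiv ℝ (fderiv ℝ (Function.uncurry f)) (c m, m)
  have hF : Differentiable ℝ (Function.uncurry f) := hf.differentiable (by norm_num)
  have hB : ∀ ξ η, B ξ η = B η ξ := hf.contDiffAt.isSymmSndFDerivAt (by simp)
  have hH : ∀ᶠ s in 𝓝 m, HasDerivAt h (fderiv ℝ (Function.uncurry f) (c s, s) (0, 1)) s := by
    filter_upwards [hfoc, hh.eventually_nhds] with s hs hhs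
    exact hasDerivAt_envelope (hF _) (hc s).hasDerivAt hs hhs
  have hfix : ∀ s, HasDerivAt (f (c m)) (fderiv ℝ (Function.uncurry f) (c m, s) (0, 1)) s :=
    fun s => (hF _).hasDerivAt_comp_graph (hasDerivAt_const s (c m))
  -- differentiating the first-order condition `∇ᵥ f (c s, s) = -p` along the curve
  have hw : ∀ y, B (deriv c m, 1) (y, 0) = 0 := by
    have hconst : HasDerivAt (fun s => partialGradient f (c s, s)) 0 m :=
      (hasDerivAt_const m (-p)).congr_of_eventuallyEq hfoc
    have hchain := ((contDiff_partialGradient hf).differentiable one_ne_zero _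
      ).hasDerivAt_comp_graph (hc m).hasDerivAt
    intro y
    rw [← inner_fderiv_partialGradient hf, hchain.unique hconst, inner_zero_left]
  have hu' : ∀ y, B (u, 0) (y, 0) = B (0, 1) (y, 0) := fun y => by
    rw [← inner_fderiv_gradient_fst hf, hu, inner_deriv_gradient_snd hf]
  rw [deriv_deriv_id_mul hH (hasDerivAt_fderiv_apply_comp_graph hf (hc m).hasDerivAt _),
    deriv_deriv_id_mul (.of_forall hfix)
      (hasDerivAt_fderiv_apply_comp_graph hf (hasDerivAt_const m (c m)) _),
    B.apply_eq_schur_complement hB hw hu', inner_deriv_gradient_snd hf]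
  ring

end Gradient

/-- ∂²_{mm}(m H(p,m)) is the Schur complement of the block
m D²_{vv}f(v*,m) in Θ(v*,m): with w₀ = ∂_m∇_v f(v*,m), for any u solving
(m D²_{vv}f(v*,m)) u = m w₀ one has
∂²_{mm}(m H(p,m)) = ∂²_{mm}(m f(v*,·))(m) − ⟪m w₀, u⟫.
Consequently, if Θ(v,m) is positive definite for all v and m > 0, then
m ↦ m H(p,m) is strictly convex on (0,∞) for every p. -/
theorem stmt13 {d : ℕ} (f : EuclideanSpace ℝ (Fin d) → ℝ → ℝ)
    (hf : ContDiff ℝ 2 (fun q : EuclideanSpace ℝ (Fin d) × ℝ => f q.1 q.2))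
    (H : EuclideanSpace ℝ (Fin d) → ℝ → ℝ)
    (vstar : EuclideanSpace ℝ (Fin d) → ℝ → EuclideanSpace ℝ (Fin d))
    (hvstar : ContDiff ℝ 1 (fun q : EuclideanSpace ℝ (Fin d) × ℝ => vstar q.1 q.2))
    (hmin : ∀ p m, 0 < m →
      IsLeast (Set.range fun v => ⟪p, v⟫_ℝ + f v m) (H p m))
    (huniq : ∀ p m, 0 < m → H p m = ⟪p, vstar p m⟫_ℝ + f (vstar p m) m ∧
      ∀ v, H p m = ⟪p, v⟫_ℝ + f v m → v = vstar p m)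
    (hposdef : ∀ p m, 0 < m → ∀ w : EuclideanSpace ℝ (Fin d), w ≠ 0 →
      0 < ⟪w, fderiv ℝ (fun v => gradient (fun u => f u m) v) (vstar p m) w⟫_ℝ) :
    (∀ (p : EuclideanSpace ℝ (Fin d)) (m : ℝ), 0 < m →
      ∀ u : EuclideanSpace ℝ (Fin d),
        m • (fderiv ℝ (fun v => gradient (fun u' => f u' m) v) (vstar p m)) u
          = m • deriv (fun t => gradient (fun u' => f u' t) (vstar p m)) m →
        deriv (fun t => deriv (fun s => s * H p s) t) m
          = deriv (fun t => deriv (fun s => s * f (vstar p m) s) t) m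
            - ⟪m • deriv (fun t => gradient (fun u' => f u' t) (vstar p m)) m, u⟫_ℝ) ∧
    ((∀ (v : EuclideanSpace ℝ (Fin d)) (m : ℝ), 0 < m →
        ∀ (μ : ℝ) (w : EuclideanSpace ℝ (Fin d)), (μ, w) ≠ 0 →
          0 < μ ^ 2 * deriv (fun t => deriv (fun s => s * f v s) t) m
            + 2 * μ * ⟪m • deriv (fun t => gradient (fun u' => f u' t) v) m, w⟫_ℝ
            + ⟪w, m • (fderiv ℝ (fun v' => gradient (fun u' => f u' m) v') v) w⟫_ℝ) →
      ∀ p, StrictConvexOn ℝ (Set.Ioi (0:ℝ)) (fun m => m * H p m)) := by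
  have hc : ∀ p, Differentiable ℝ (vstar p) := fun p =>
    (hvstar.comp (contDiff_const.prodMk contDiff_id)).differentiable one_ne_zero
  have hfoc : ∀ p s, 0 < s → partialGradient f (vstar p s, s) = -p := fun p s hs =>
    gradient_eq_neg_of_isLocalMin_inner_add
      ((hf.differentiable (by norm_num) _).comp _
        (differentiableAt_id.prodMk (differentiableAt_const s)))
      (.of_forall fun v => by
        have hle := (hmin p s hs).2 ⟨v, rfl⟩
        rwa [(huniq p s hs).1] at hle)
  have schur := fun p m (hm : 0 < m) u hu =>
    deriv_deriv_mul_envelope_eq_schur hf (hc p) ((eventually_gt_nhds hm).mono (hfoc p))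
      ((eventually_gt_nhds hm).mono fun s hs => (huniq p s hs).1) (u := u) hu
  refine ⟨fun p m hm u hu => ?_, fun hΘ p => ?_⟩
  · rw [real_inner_smul_left]
    exact schur p m hm u (smul_right_injective _ hm.ne' hu)
  refine strictConvexOn_of_deriv2_pos' (convex_Ioi 0) ?_ fun m hm => ?_
  · have hinner : Continuous fun s => ⟪p, vstar p s⟫_ℝ := continuous_const.inner (hc p).continuous
    have hfc : Continuous fun s => f (vstar p s) s :=
      hf.continuous.comp ((hc p).continuous.prodMk continuous_id)
    exact (continuous_id.mul (hinner.add hfc)).continuousOn.congr fun s hs => by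
      rw [(huniq p s hs).1]
      rfl
  obtain ⟨u, hu⟩ := ContinuousLinearMap.surjective_of_inner_apply_pos _ (hposdef p m hm)
    (deriv (fun t => gradient (fun u' => f u' t) (vstar p m)) m)
  show 0 < deriv (fun t => deriv (fun s => s * H p s) t) m
  rw [schur p m hm u hu, ← real_inner_smul_left]
  exact (m • fderiv ℝ (fun v => gradient (fun u' => f u' m) v) (vstar p m)).schur_complement_pos
    (hΘ _ m hm) (congrArg (m • ·) hu)
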